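/- Let Γ be a regular nicely distance-balanced graph with valency k = 3, diameter d = 3 and γ(Γ) = 4. Then Γ is triangle-free, and for every edge xy of Γ the set D^3_3(x,y) of vertices at distance 3 from both x and y is empty. -/
import Mathlib

open SimpleGraph Finset

/-- `W_{u,v}`: the set of vertices strictly closer to `u` than to `v`. -/
noncomputable def ndbW {V : Type*} [Fintype V] (G : SimpleGraph V) (u v : V) : Finset V :=
  Finset.univ.filter fun x => G.dist x u < G.dist x v

/-- `D^i_j(u,v)`: the set of vertices at distance `i` from `u` and `j` from `v`. -/
noncomputable def ndbD {V : Type*} [Fintype V] (G : SimpleGraph V) (u v : V) (i j : ℕ) : Finset V :=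
  Finset.univ.filter fun x => G.dist x u = i ∧ G.dist x v = j

/-- `G` is nicely distance-balanced with constant `γ`. -/
def IsNDB {V : Type*} [Fintype V] (G : SimpleGraph V) (γ : ℕ) : Prop :=
  ∀ u v : V, G.Adj u v → (ndbW G u v).card = γ ∧ (ndbW G v u).card = γ

/-- `G` has diameter `d`. -/
def HasDiam {V : Type*} [Fintype V] (G : SimpleGraph V) (d : ℕ) : Prop :=
  (∀ u v : V, G.dist u v ≤ d) ∧ ∃ u v : V, G.dist u v = d

/-- common neighbours of `u` and `v`. -/
def commonNbrs {V : Type*} [Fintype V] (G : SimpleGraph V) [DecidableRel G.Adj] (u v : V) :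
    Finset V :=
  Finset.univ.filter fun x => G.Adj u x ∧ G.Adj v x

section Aux

variable {V : Type*} [Fintype V] {G : SimpleGraph V} [DecidableRel G.Adj]

lemma mem_ndbD {u v x : V} {i j : ℕ} :
    x ∈ ndbD G u v i j ↔ G.dist x u = i ∧ G.dist x v = j := by
  simp [ndbD]

lemma mem_commonNbrs {u v x : V} :
    x ∈ commonNbrs G u v ↔ G.Adj u x ∧ G.Adj v x := by
  simp [commonNbrs]

lemma dist_le_adj (hconn : G.Connected) {u v : V} (h : G.Adj u v) (x : V) :
    G.dist x v ≤ G.dist x u + 1 := by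
  calc G.dist x v ≤ G.dist x u + G.dist u v := hconn.dist_triangle
  _ = G.dist x u + 1 := by rw [dist_eq_one_iff_adj.2 h]

/-- neighbour on a geodesic -/
lemma exists_adj_dist (hconn : G.Connected) {x u : V} {k : ℕ} (h : G.dist x u = k + 1) :
    ∃ z, G.Adj x z ∧ G.dist z u = k := by
  obtain ⟨p, hp⟩ := (hconn x u).exists_walk_length_eq_dist
  rw [h] at hp
  cases p with
  | nil => simp at hp
  | @cons _ z _ hadj q =>
    refine ⟨z, hadj, ?_⟩
    have h1 : G.dist z u ≤ k := by
      have := dist_le q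
      simp only [Walk.length_cons] at hp
      omega
    have h2 : G.dist x u ≤ G.dist x z + G.dist z u := hconn.dist_triangle
    have h3 : G.dist x z = 1 := dist_eq_one_iff_adj.2 hadj
    omega

lemma dist_eq_two (hconn : G.Connected) {x y m : V} (hne : x ≠ y) (hnadj : ¬ G.Adj x y)
    (h1 : G.Adj x m) (h2 : G.Adj m y) : G.dist x y = 2 := by
  have hub : G.dist x y ≤ 2 := by
    have := dist_le_adj hconn h2 x
    rw [dist_eq_one_iff_adj.2 h1] at this
    omega
  have h0 : G.dist x y ≠ 0 := fun hh => hne (hconn.dist_eq_zero_iff.1 hh)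
  have h1' : G.dist x y ≠ 1 := fun hh => hnadj (dist_eq_one_iff_adj.1 hh)
  omega

lemma dist_eq_three (hconn : G.Connected) (hdiam : HasDiam G 3) {x y : V} (hne : x ≠ y)
    (hnadj : ¬ G.Adj x y) (hnc : ∀ m, G.Adj x m → ¬ G.Adj m y) : G.dist x y = 3 := by
  have hub : G.dist x y ≤ 3 := hdiam.1 x y
  have h0 : G.dist x y ≠ 0 := fun hh => hne (hconn.dist_eq_zero_iff.1 hh)
  have h1' : G.dist x y ≠ 1 := fun hh => hnadj (dist_eq_one_iff_adj.1 hh)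
  have h2 : G.dist x y ≠ 2 := by
    intro h2
    obtain ⟨m, hm1, hm2⟩ := exists_adj_dist hconn (k := 1) h2
    exact hnc m hm1 (dist_eq_one_iff_adj.1 hm2)
  omega

/-- the third neighbour -/
lemma third_nbr (hreg : G.IsRegularOfDegree 3) {u v w : V} (huv : G.Adj u v) (huw : G.Adj u w)
    (hvw : v ≠ w) : ∃ a, a ≠ v ∧ a ≠ w ∧ G.Adj u a ∧
      (∀ x, G.Adj u x ↔ (x = v ∨ x = w ∨ x = a)) := by
  classical
  have h3 : (G.neighborFinset u).card = 3 := hreg u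
  have hsub : ({v, w} : Finset V) ⊆ G.neighborFinset u := by
    intro x hx
    simp only [Finset.mem_insert, Finset.mem_singleton] at hx
    rcases hx with rfl | rfl <;> simp [mem_neighborFinset, huv, huw]
  have hvwcard : ({v, w} : Finset V).card = 2 := card_pair hvw
  have hone : (G.neighborFinset u \ {v, w}).card = 1 := by
    rw [Finset.card_sdiff_of_subset hsub, h3, hvwcard]
  obtain ⟨a, ha⟩ := Finset.card_eq_one.1 hone
  have haa : a ∈ G.neighborFinset u \ {v, w} := ha ▸ Finset.mem_singleton_self a
  simp only [Finset.mem_sdiff, mem_neighborFinset, Finset.mem_insert,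
    Finset.mem_singleton, not_or] at haa
  refine ⟨a, haa.2.1, haa.2.2, haa.1, fun x => ?_⟩
  constructor
  · intro hx
    by_cases h1 : x = v
    · exact Or.inl h1
    by_cases h2 : x = w
    · exact Or.inr (Or.inl h2)
    have : x ∈ G.neighborFinset u \ {v, w} := by
      simp [mem_neighborFinset, hx, h1, h2]
    rw [ha, Finset.mem_singleton] at this
    exact Or.inr (Or.inr this)
  · rintro (rfl | rfl | rfl)
    · exact huv
    · exact huw
    · exact haa.1

lemma ndbD01 (hconn : G.Connected) {u v : V} (h : G.Adj u v) :
    ndbD G u v 0 1 = {u} := by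
  ext x
  simp only [mem_ndbD, Finset.mem_singleton]
  constructor
  · rintro ⟨h0, -⟩
    exact hconn.dist_eq_zero_iff.1 h0
  · rintro rfl
    exact ⟨SimpleGraph.dist_self, dist_eq_one_iff_adj.2 h⟩

lemma mem_ndbD12 (hconn : G.Connected) {u v x : V} (h : G.Adj u v) :
    x ∈ ndbD G u v 1 2 ↔ (G.Adj u x ∧ x ≠ v ∧ ¬ G.Adj v x) := by
  simp only [mem_ndbD]
  constructor
  · rintro ⟨h1, h2⟩
    have hadj : G.Adj x u := dist_eq_one_iff_adj.1 h1
    refine ⟨hadj.symm, ?_, ?_⟩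
    · rintro rfl; rw [SimpleGraph.dist_self] at h2; omega
    · intro hvx
      rw [dist_eq_one_iff_adj.2 hvx.symm] at h2; omega
  · rintro ⟨h1, h2, h3⟩
    refine ⟨dist_eq_one_iff_adj.2 h1.symm, ?_⟩
    exact dist_eq_two hconn h2 (fun hh => h3 hh.symm) h1.symm h

lemma card_ndbD12 (hconn : G.Connected) (hreg : G.IsRegularOfDegree 3) {u v : V}
    (h : G.Adj u v) : (ndbD G u v 1 2).card + (commonNbrs G u v).card = 2 := by
  classical
  have hdisj : Disjoint (ndbD G u v 1 2) (commonNbrs G u v) := by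
    rw [Finset.disjoint_left]
    intro x hx hx'
    rw [mem_ndbD12 hconn h] at hx
    rw [mem_commonNbrs] at hx'
    exact hx.2.2 hx'.2
  have hunion : ndbD G u v 1 2 ∪ commonNbrs G u v = G.neighborFinset u \ {v} := by
    ext x
    simp only [Finset.mem_union, mem_ndbD12 hconn h, mem_commonNbrs, Finset.mem_sdiff,
      mem_neighborFinset, Finset.mem_singleton]
    constructor
    · rintro (⟨h1, h2, h3⟩ | ⟨h1, h2⟩)
      · exact ⟨h1, h2⟩
      · exact ⟨h1, fun hxv => G.irrefl (hxv ▸ h2)⟩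
    · rintro ⟨h1, h2⟩
      by_cases h3 : G.Adj v x
      · exact Or.inr ⟨h1, h3⟩
      · exact Or.inl ⟨h1, h2, h3⟩
  have hcard : (G.neighborFinset u \ {v}).card = 2 := by
    have h3 : (G.neighborFinset u).card = 3 := hreg u
    rw [Finset.card_sdiff_of_subset (by simp [mem_neighborFinset, h]), h3, Finset.card_singleton]
  rw [← Finset.card_union_of_disjoint hdisj, hunion, hcard]

lemma W_decomp (hconn : G.Connected) (hdiam : HasDiam G 3) {u v : V} (h : G.Adj u v) :
    (ndbW G u v).card = 1 + (ndbD G u v 1 2).card + (ndbD G u v 2 3).card := by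
  classical
  have hW : ndbW G u v = ndbD G u v 0 1 ∪ ndbD G u v 1 2 ∪ ndbD G u v 2 3 := by
    ext x
    simp only [ndbW, ndbD, Finset.mem_union, Finset.mem_filter, Finset.mem_univ, true_and]
    have h1 : G.dist x v ≤ G.dist x u + 1 := dist_le_adj hconn h x
    have h3 : G.dist x v ≤ 3 := hdiam.1 x v
    omega
  have d1 : Disjoint (ndbD G u v 0 1) (ndbD G u v 1 2) := by
    rw [Finset.disjoint_left]; intro x hx hx'
    rw [mem_ndbD] at hx hx'; omega
  have d2 : Disjoint (ndbD G u v 0 1 ∪ ndbD G u v 1 2) (ndbD G u v 2 3) := by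
    rw [Finset.disjoint_left]; intro x hx hx'
    rw [Finset.mem_union] at hx
    rw [mem_ndbD] at hx'
    rcases hx with hx | hx <;> rw [mem_ndbD] at hx <;> omega
  rw [hW, Finset.card_union_of_disjoint d2, Finset.card_union_of_disjoint d1,
    ndbD01 hconn h, Finset.card_singleton]

lemma card_ndbD23 (hconn : G.Connected) (hreg : G.IsRegularOfDegree 3) (hdiam : HasDiam G 3)
    (hndb : IsNDB G 4) {u v : V} (h : G.Adj u v) :
    (ndbD G u v 2 3).card = 1 + (commonNbrs G u v).card := by
  have h4 : (ndbW G u v).card = 4 := (hndb u v h).1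
  have hd := W_decomp hconn hdiam h
  have h12 := card_ndbD12 hconn hreg h
  omega

lemma covering (hconn : G.Connected) {u v x : V} (h : G.Adj u v)
    (hx : x ∈ ndbD G u v 2 3) : ∃ z, G.Adj x z ∧ z ∈ ndbD G u v 1 2 := by
  rw [mem_ndbD] at hx
  obtain ⟨z, hadj, hz⟩ := exists_adj_dist hconn (k := 1) hx.1
  refine ⟨z, hadj, ?_⟩
  rw [mem_ndbD]
  refine ⟨hz, ?_⟩
  have h1 : G.dist z v ≤ G.dist z u + 1 := dist_le_adj hconn h z
  have h2' : G.dist x v ≤ G.dist x z + G.dist z v := hconn.dist_triangle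
  have h3 : G.dist x z = 1 := dist_eq_one_iff_adj.2 hadj
  omega

lemma common_card_le_one (hconn : G.Connected) (hreg : G.IsRegularOfDegree 3)
    (hdiam : HasDiam G 3) (hndb : IsNDB G 4) {u v : V} (h : G.Adj u v) :
    (commonNbrs G u v).card ≤ 1 := by
  classical
  have h23 := card_ndbD23 hconn hreg hdiam hndb h
  have h12 := card_ndbD12 hconn hreg h
  -- D23 ⊆ biUnion over D12 of (neighbours minus u)
  have hsub : ndbD G u v 2 3 ⊆
      (ndbD G u v 1 2).biUnion (fun w => G.neighborFinset w \ {u}) := by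
    intro x hx
    obtain ⟨z, hadj, hz⟩ := covering hconn h hx
    rw [Finset.mem_biUnion]
    refine ⟨z, hz, ?_⟩
    rw [mem_ndbD] at hx
    simp only [Finset.mem_sdiff, mem_neighborFinset, Finset.mem_singleton]
    refine ⟨hadj.symm, ?_⟩
    rintro rfl
    rw [SimpleGraph.dist_self] at hx; omega
  have hbound : ∀ w ∈ ndbD G u v 1 2, (G.neighborFinset w \ {u}).card ≤ 2 := by
    intro w hw
    rw [mem_ndbD] at hw
    have hadj : G.Adj w u := dist_eq_one_iff_adj.1 hw.1
    have h3 : (G.neighborFinset w).card = 3 := hreg w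
    rw [Finset.card_sdiff_of_subset (by simp [mem_neighborFinset, hadj]), h3, Finset.card_singleton]
  have hle : (ndbD G u v 2 3).card ≤ (ndbD G u v 1 2).card * 2 := by
    calc (ndbD G u v 2 3).card
        ≤ ((ndbD G u v 1 2).biUnion (fun w => G.neighborFinset w \ {u})).card :=
          Finset.card_le_card hsub
      _ ≤ ∑ w ∈ ndbD G u v 1 2, (G.neighborFinset w \ {u}).card := Finset.card_biUnion_le
      _ ≤ ∑ _w ∈ ndbD G u v 1 2, 2 := Finset.sum_le_sum hbound
      _ = (ndbD G u v 1 2).card * 2 := by rw [Finset.sum_const, smul_eq_mul]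
  omega

/-- For an edge `uv` in a triangle `uvw`, the third neighbour `a` of `u` satisfies:
`D^2_3(u,v)` is exactly the set of neighbours of `a` other than `u`. -/
lemma triangle_side (hconn : G.Connected) (hreg : G.IsRegularOfDegree 3) (hdiam : HasDiam G 3)
    (hndb : IsNDB G 4) {u v w : V} (huv : G.Adj u v) (huw : G.Adj u w) (hvw : G.Adj v w) :
    ∃ a, a ≠ v ∧ a ≠ w ∧ G.Adj u a ∧ ¬ G.Adj v a ∧
      (∀ x, G.Adj u x ↔ (x = v ∨ x = w ∨ x = a)) ∧
      (∀ x, x ∈ ndbD G u v 2 3 ↔ (G.Adj a x ∧ x ≠ u)) := by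
  classical
  obtain ⟨a, hav, haw, hua, hNu⟩ := third_nbr hreg huv huw hvw.ne
  have hcle := common_card_le_one hconn hreg hdiam hndb huv
  have hwmem : w ∈ commonNbrs G u v := mem_commonNbrs.2 ⟨huw, hvw⟩
  have hunique : ∀ x ∈ commonNbrs G u v, x = w :=
    fun x hx => Finset.card_le_one.1 hcle x hx w hwmem
  have hnva : ¬ G.Adj v a := by
    intro hva
    exact haw (hunique a (mem_commonNbrs.2 ⟨hua, hva⟩))
  have hcomm : commonNbrs G u v = {w} := by
    ext x
    simp only [Finset.mem_singleton]
    constructor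
    · exact hunique x
    · rintro rfl; exact hwmem
  have hccard : (commonNbrs G u v).card = 1 := by rw [hcomm, Finset.card_singleton]
  have h23 : (ndbD G u v 2 3).card = 2 := by
    rw [card_ndbD23 hconn hreg hdiam hndb huv, hccard]
  have hD12 : ∀ x, x ∈ ndbD G u v 1 2 ↔ x = a := by
    intro x
    rw [mem_ndbD12 hconn huv]
    constructor
    · rintro ⟨h1, h2, h3⟩
      rcases (hNu x).1 h1 with rfl | rfl | rfl
      · exact absurd rfl h2
      · exact absurd hvw h3
      · rfl
    · rintro rfl
      exact ⟨hua, hav, hnva⟩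
  have hsub : ndbD G u v 2 3 ⊆ G.neighborFinset a \ {u} := by
    intro x hx
    obtain ⟨z, hadj, hz⟩ := covering hconn huv hx
    have hza : z = a := (hD12 z).1 hz
    subst hza
    rw [mem_ndbD] at hx
    simp only [Finset.mem_sdiff, mem_neighborFinset, Finset.mem_singleton]
    refine ⟨hadj.symm, ?_⟩
    rintro rfl
    rw [SimpleGraph.dist_self] at hx
    omega
  have hNacard : (G.neighborFinset a \ {u}).card = 2 := by
    have h3 : (G.neighborFinset a).card = 3 := hreg a
    rw [Finset.card_sdiff_of_subset (by simp [mem_neighborFinset, hua.symm]), h3, Finset.card_singleton]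
  have heq : ndbD G u v 2 3 = G.neighborFinset a \ {u} :=
    Finset.eq_of_subset_of_card_le hsub (by omega)
  refine ⟨a, hav, haw, hua, hnva, hNu, fun x => ?_⟩
  rw [heq]
  simp only [Finset.mem_sdiff, mem_neighborFinset, Finset.mem_singleton]

lemma part1 (hconn : G.Connected) (hreg : G.IsRegularOfDegree 3) (hdiam : HasDiam G 3)
    (hndb : IsNDB G 4) :
    ∀ u v : V, G.Adj u v → ∀ w : V, ¬ (G.Adj u w ∧ G.Adj v w) := by
  intro u v huv w hw
  obtain ⟨huw, hvw⟩ := hw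
  -- the three sides of the triangle
  obtain ⟨a, hav, haw, hua, hnva, hNu, hD23uv⟩ :=
    triangle_side hconn hreg hdiam hndb huv huw hvw
  obtain ⟨c, hcu, hcw, hvc, hnuc, hNv, hD23vu⟩ :=
    triangle_side hconn hreg hdiam hndb huv.symm hvw huw
  obtain ⟨a', ha'w, ha'v, hua', hnwa', hNu', hD23uw⟩ :=
    triangle_side hconn hreg hdiam hndb huw huv hvw.symm
  obtain ⟨c', hc'w, hc'u, hvc', hnwc', hNv', hD23vw⟩ :=
    triangle_side hconn hreg hdiam hndb hvw huv.symm huw.symm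
  -- a' = a
  have ha'a : a' = a := by
    rcases (hNu a').1 hua' with rfl | rfl | rfl
    · exact absurd rfl ha'v
    · exact absurd rfl ha'w
    · rfl
  rw [ha'a] at hnwa' hD23uw
  have hnwa : ¬ G.Adj w a := hnwa'
  -- c' = c
  have hc'c : c' = c := by
    rcases (hNv c').1 hvc' with rfl | rfl | rfl
    · exact absurd rfl hc'u
    · exact absurd rfl hc'w
    · rfl
  rw [hc'c] at hnwc' hD23vw
  have hnwc : ¬ G.Adj w c := hnwc'
  -- the third neighbour z of w
  obtain ⟨z, hzu, hzv, hwz, hNw⟩ := third_nbr hreg huw.symm hvw.symm huv.ne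
  have hza : z ≠ a := by rintro rfl; exact hnwa hwz
  have hzc : z ≠ c := by rintro rfl; exact hnwc hwz
  have hnuz : ¬ G.Adj u z := by
    intro h
    rcases (hNu z).1 h with rfl | rfl | rfl
    · exact absurd rfl hzv
    · exact G.irrefl hwz
    · exact absurd rfl hza
  have hnvz : ¬ G.Adj v z := by
    intro h
    rcases (hNv z).1 h with rfl | rfl | rfl
    · exact absurd rfl hzu
    · exact G.irrefl hwz
    · exact absurd rfl hzc
  -- no common neighbours of w and z
  have hcomm0 : (commonNbrs G w z).card = 0 := by
    rw [Finset.card_eq_zero]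
    rw [Finset.eq_empty_iff_forall_notMem]
    intro x hx
    rw [mem_commonNbrs] at hx
    rcases (hNw x).1 hx.1 with rfl | rfl | rfl
    · exact hnuz hx.2.symm
    · exact hnvz hx.2.symm
    · exact G.irrefl hx.2
  have hcard1 : (ndbD G w z 2 3).card = 1 := by
    rw [card_ndbD23 hconn hreg hdiam hndb hwz, hcomm0]
  -- a is in D23(w,z)
  have hnaw : ¬ G.Adj a w := fun h => hnwa h.symm
  have hdaw : G.dist a w = 2 := dist_eq_two hconn haw hnaw hua.symm huw
  have hdaz : G.dist a z = 3 := by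
    refine dist_eq_three hconn hdiam (fun h => hza h.symm) ?_ ?_
    · intro h
      have : z ∈ ndbD G u w 2 3 := (hD23uw z).2 ⟨h, hzu⟩
      rw [mem_ndbD] at this
      have : G.dist z w = 1 := dist_eq_one_iff_adj.2 hwz.symm
      omega
    · intro m hm hmz
      by_cases hmu : m = u
      · subst hmu; exact hnuz hmz
      · have hmem : m ∈ ndbD G u w 2 3 := (hD23uw m).2 ⟨hm, hmu⟩
        rw [mem_ndbD] at hmem
        have h1 : G.dist m w ≤ G.dist m z + 1 := dist_le_adj hconn hwz.symm m
        have h2 : G.dist m z = 1 := dist_eq_one_iff_adj.2 hmz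
        omega
  have hamem : a ∈ ndbD G w z 2 3 := mem_ndbD.2 ⟨hdaw, hdaz⟩
  -- c is in D23(w,z)
  have hncw : ¬ G.Adj c w := fun h => hnwc h.symm
  have hdcw : G.dist c w = 2 := dist_eq_two hconn hcw hncw hvc.symm hvw
  have hdcz : G.dist c z = 3 := by
    refine dist_eq_three hconn hdiam (fun h => hzc h.symm) ?_ ?_
    · intro h
      have : z ∈ ndbD G v w 2 3 := (hD23vw z).2 ⟨h, hzv⟩
      rw [mem_ndbD] at this
      have : G.dist z w = 1 := dist_eq_one_iff_adj.2 hwz.symm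
      omega
    · intro m hm hmz
      by_cases hmv : m = v
      · subst hmv; exact hnvz hmz
      · have hmem : m ∈ ndbD G v w 2 3 := (hD23vw m).2 ⟨hm, hmv⟩
        rw [mem_ndbD] at hmem
        have h1 : G.dist m w ≤ G.dist m z + 1 := dist_le_adj hconn hwz.symm m
        have h2 : G.dist m z = 1 := dist_eq_one_iff_adj.2 hmz
        omega
  have hcmem : c ∈ ndbD G w z 2 3 := mem_ndbD.2 ⟨hdcw, hdcz⟩
  have hac : a ≠ c := by
    rintro rfl
    exact hnuc hua
  have : (1 : ℕ) < (ndbD G w z 2 3).card :=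
    Finset.one_lt_card.2 ⟨a, hamem, c, hcmem, hac⟩
  omega

end Aux

/-- A regular NDB graph with valency `3`, diameter `3` and `γ = 4`
is triangle-free, and for every edge `xy` the set `D^3_3(x,y)` is empty. -/
theorem stmt_12 {V : Type*} [Fintype V] (G : SimpleGraph V) [DecidableRel G.Adj]
    (hconn : G.Connected) (hreg : G.IsRegularOfDegree 3)
    (hdiam : HasDiam G 3) (hndb : IsNDB G 4) :
    (∀ u v : V, G.Adj u v → ∀ w : V, ¬ (G.Adj u w ∧ G.Adj v w)) ∧
    (∀ x y : V, G.Adj x y → ndbD G x y 3 3 = ∅) := by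
  have TF := part1 hconn hreg hdiam hndb
  refine ⟨TF, ?_⟩
  intro u v huv
  -- no common neighbours anywhere, so every D23 is a singleton-cardinality set
  have hc0 : ∀ a b : V, G.Adj a b → (commonNbrs G a b).card = 0 := by
    intro a b h
    rw [Finset.card_eq_zero, Finset.eq_empty_iff_forall_notMem]
    intro x hx
    exact TF a b h x (mem_commonNbrs.1 hx)
  have hcard1 : ∀ a b : V, G.Adj a b → (ndbD G a b 2 3).card = 1 := by
    intro a b h
    rw [card_ndbD23 hconn hreg hdiam hndb h, hc0 a b h]
  rw [Finset.eq_empty_iff_forall_notMem]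
  intro p hp
  rw [mem_ndbD] at hp
  obtain ⟨hpu, hpv⟩ := hp
  -- no neighbour of a vertex at distance 3 from both u and v is at distance 2 from both
  have not22 : ∀ p' : V, G.dist p' u = 3 → G.dist p' v = 3 → ∀ z : V, G.Adj p' z →
      ¬ (G.dist z u = 2 ∧ G.dist z v = 2) := by
    intro p' hp'u hp'v z hadj h22
    have humem : u ∈ ndbD G z p' 2 3 := by
      rw [mem_ndbD, SimpleGraph.dist_comm (G := G) (u := u) (v := z),
        SimpleGraph.dist_comm (G := G) (u := u) (v := p')]
      exact ⟨h22.1, hp'u⟩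
    have hvmem : v ∈ ndbD G z p' 2 3 := by
      rw [mem_ndbD, SimpleGraph.dist_comm (G := G) (u := v) (v := z),
        SimpleGraph.dist_comm (G := G) (u := v) (v := p')]
      exact ⟨h22.2, hp'v⟩
    have h1 : (ndbD G z p' 2 3).card = 1 := hcard1 z p' hadj.symm
    have : (1 : ℕ) < (ndbD G z p' 2 3).card :=
      Finset.one_lt_card.2 ⟨u, humem, v, hvmem, huv.ne⟩
    omega
  -- bounds on distances of neighbours
  have hnbr : ∀ p' : V, G.dist p' u = 3 → G.dist p' v = 3 → ∀ z : V, G.Adj p' z →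
      (2 ≤ G.dist z u ∧ G.dist z u ≤ 3 ∧ 2 ≤ G.dist z v ∧ G.dist z v ≤ 3) := by
    intro p' hp'u hp'v z hadj
    have h1 : G.dist p' u ≤ G.dist z u + 1 := by
      rw [SimpleGraph.dist_comm (G := G) (u := p') (v := u),
        SimpleGraph.dist_comm (G := G) (u := z) (v := u)]
      exact dist_le_adj hconn hadj.symm u
    have h2 : G.dist p' v ≤ G.dist z v + 1 := by
      rw [SimpleGraph.dist_comm (G := G) (u := p') (v := v),
        SimpleGraph.dist_comm (G := G) (u := z) (v := v)]
      exact dist_le_adj hconn hadj.symm v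
    exact ⟨by omega, hdiam.1 z u, by omega, hdiam.1 z v⟩
  -- neighbours of a (3,3) vertex are of type (2,3), (3,2), or (3,3),
  -- and any (2,3)-neighbour lies in D23(u,v)
  have hq : ∀ p' : V, G.dist p' u = 3 → G.dist p' v = 3 →
      ∃ q, G.Adj p' q ∧ q ∈ ndbD G u v 2 3 := by
    intro p' hp'u hp'v
    obtain ⟨q, hadj, hqu⟩ := exists_adj_dist hconn (k := 2) hp'u
    have hb := hnbr p' hp'u hp'v q hadj
    have h22 := not22 p' hp'u hp'v q hadj
    have hqv : G.dist q v = 3 := by omega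
    exact ⟨q, hadj, mem_ndbD.2 ⟨hqu, hqv⟩⟩
  obtain ⟨q, hpq, hqmem⟩ := hq p hpu hpv
  -- neighbour of p at distance 2 from v, distance 3 from u
  obtain ⟨r, hpr, hrv⟩ := exists_adj_dist hconn (k := 2) hpv
  have hbr := hnbr p hpu hpv r hpr
  have hru : G.dist r u = 3 := by
    have := not22 p hpu hpv r hpr
    omega
  have hqr : q ≠ r := by
    rw [mem_ndbD] at hqmem
    rintro rfl
    omega
  -- third neighbour z of p
  obtain ⟨z, hzq, hzr, hpz, hNp⟩ := third_nbr hreg hpq hpr hqr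
  have hbz := hnbr p hpu hpv z hpz
  have hz22 := not22 p hpu hpv z hpz
  -- z cannot be of type (2,3) or (3,2)
  have hzu3 : G.dist z u = 3 ∧ G.dist z v = 3 := by
    rcases Nat.lt_or_ge (G.dist z u) 3 with h | h
    · -- dist z u = 2, so dist z v = 3, so z ∈ D23(u,v) = {q}, contradiction
      have hzv3 : G.dist z v = 3 := by omega
      have hzmem : z ∈ ndbD G u v 2 3 := mem_ndbD.2 ⟨by omega, hzv3⟩
      have h1 : (ndbD G u v 2 3).card = 1 := hcard1 u v huv
      have : z = q := Finset.card_le_one.1 (le_of_eq h1) z hzmem q hqmem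
      exact absurd this hzq
    · rcases Nat.lt_or_ge (G.dist z v) 3 with h' | h'
      · -- dist z v = 2, dist z u = 3, so z ∈ D23(v,u) together with r
        have hzmem : z ∈ ndbD G v u 2 3 := mem_ndbD.2 ⟨by omega, by omega⟩
        have hrmem : r ∈ ndbD G v u 2 3 := mem_ndbD.2 ⟨hrv, hru⟩
        have h1 : (ndbD G v u 2 3).card = 1 := hcard1 v u huv.symm
        have : z = r := Finset.card_le_one.1 (le_of_eq h1) z hzmem r hrmem
        exact absurd this hzr
      · exact ⟨by omega, by omega⟩
  -- z is itself of type (3,3); its (2,3)-neighbour must be q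
  obtain ⟨q', hzq', hq'mem⟩ := hq z hzu3.1 hzu3.2
  have h1 : (ndbD G u v 2 3).card = 1 := hcard1 u v huv
  have hq'q : q' = q := Finset.card_le_one.1 (le_of_eq h1) q' hq'mem q hqmem
  -- triangle p z q contradicts triangle-freeness
  exact TF p z hpz q ⟨hpq, hq'q ▸ hzq'⟩
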